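/- Let S be a decision rule system with n(S) > 0 and let C ∈ {EAD, ESR}. Then h_C(S) ≤ d(I_C(S))·β_C⁺(S). -/

import Mathlib

/- Common formal framework for decision rule systems and decision trees /
   acyclic decision graphs, following Durdymyradov & Moshkov. -/

attribute [local instance] Classical.propDecidable

noncomputable section

namespace DRS

/-- A decision rule `(a_{i₁}=δ₁) ∧ ⋯ ∧ (a_{i_m}=δ_m) → σ`:
`K` is the finite set of equations (attribute index, value), `rhs` is σ. -/
structure Rule where
  K : Finset (ℕ × ℕ)
  rhs : ℕ

/-- Well-formedness of a rule: the attributes on its left-hand side are pairwise different. -/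
def Rule.WF (r : Rule) : Prop := ∀ p ∈ r.K, ∀ q ∈ r.K, p.1 = q.1 → p = q

/-- A(r): the set of attributes of a rule. -/
def Rule.attrs (r : Rule) : Finset ℕ := r.K.image Prod.fst

/-- The length m of a rule. -/
def Rule.len (r : Rule) : ℕ := r.K.card

/-- A(S) -/
def attrs (S : Finset Rule) : Finset ℕ := S.biUnion Rule.attrs

/-- n(S) -/
def nPar (S : Finset Rule) : ℕ := (attrs S).card

/-- d(S): the maximum length of a rule of S. -/
def dPar (S : Finset Rule) : ℕ := S.sup Rule.len

/-- D(S): the set of right-hand sides. -/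
def rhsSet (S : Finset Rule) : Finset ℕ := S.image Rule.rhs

/-- V_S(a_i) -/
def VS (S : Finset Rule) (i : ℕ) : Finset ℕ :=
  ((S.biUnion Rule.K).filter fun p => p.1 = i).image Prod.snd

/-- k(S) -/
def kPar (S : Finset Rule) : ℕ := (attrs S).sup fun i => (VS S i).card

/-- Attribute values in trees are `Option ℕ`; `none` plays the role of the special value `*`.
`allowed S false i` is (the lift of) `V_S(a_i)`, and `allowed S true i` is `EV_S(a_i)`. -/
def allowed (S : Finset Rule) (ext : Bool) (i : ℕ) : Finset (Option ℕ) :=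
  (VS S i).image some ∪ (if ext then {none} else ∅)

/-- Consistency of an equation system over ω ∪ {*}. -/
def ConsistentE (E : Finset (ℕ × Option ℕ)) : Prop :=
  ∀ p ∈ E, ∀ q ∈ E, p.1 = q.1 → p.2 = q.2

/-- Lift the left-hand side of a rule to an equation system over ω ∪ {*}. -/
def liftK (K : Finset (ℕ × ℕ)) : Finset (ℕ × Option ℕ) :=
  K.image fun p => (p.1, some p.2)

/-- A finite directed labeled graph: the nodes are `0, …, n-1`, with a distinguished root,
each node carries either an attribute (working node) or a set of rules (terminal node),
and edges are labeled with elements of ω ∪ {*}. -/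
structure DGraph where
  n : ℕ
  root : ℕ
  label : ℕ → ℕ ⊕ Finset Rule
  edges : Finset (ℕ × Option ℕ × ℕ)

namespace DGraph

def step (G : DGraph) (u v : ℕ) : Prop := ∃ l, (u, l, v) ∈ G.edges

/-- The graph has no directed cycles. -/
def Acyclic (G : DGraph) : Prop := ∀ v, ¬ Relation.TransGen G.step v v

/-- A node is terminal if no edge leaves it. -/
def IsTerminal (G : DGraph) (v : ℕ) : Prop := ∀ e ∈ G.edges, e.1 ≠ v

/-- The set of rules attached to a (terminal) node. -/
def termSet (G : DGraph) (v : ℕ) : Finset Rule :=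
  Sum.elim (fun _ => (∅ : Finset Rule)) id (G.label v)

/-- `G` is an acyclic decision graph over the rule system `S`;
`ext = false` : branching over `V_S` (o-type), `ext = true` : branching over `EV_S` (e-type).
Terminal nodes are labeled with subsets of S; each working node is labeled with an
attribute `a` of `A(S)` and has exactly one leaving edge for every element of
`V_S(a)` (resp. `EV_S(a)`), the edges leaving it being labeled with these
pairwise different elements. -/
def IsDG (G : DGraph) (S : Finset Rule) (ext : Bool) : Prop :=
  G.root < G.n ∧
  (∀ e ∈ G.edges, e.1 < G.n ∧ e.2.2 < G.n) ∧
  G.Acyclic ∧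
  (∀ v < G.n,
    if G.IsTerminal v then
      ∃ Z : Finset Rule, G.label v = Sum.inr Z ∧ Z ⊆ S
    else
      ∃ a : ℕ, G.label v = Sum.inl a ∧ a ∈ attrs S ∧
        (∀ l : Option ℕ, (∃ w, (v, l, w) ∈ G.edges) ↔ l ∈ allowed S ext a) ∧
        (∀ l w w', (v, l, w) ∈ G.edges → (v, l, w') ∈ G.edges → w = w'))

/-- `G` is a finite directed tree with root: the root has no entering edge and every
other node has exactly one entering edge (together with acyclicity this makes the
graph a rooted tree). -/
def IsTree (G : DGraph) : Prop :=
  (∀ e ∈ G.edges, e.2.2 ≠ G.root) ∧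
  (∀ v < G.n, v ≠ G.root → ∃! e, e ∈ G.edges ∧ e.2.2 = v)

/-- `chainFrom G v p t`: the list `p` of (node, leaving-edge-label) pairs forms a
directed path in `G` starting at `v` and ending at `t`. -/
def chainFrom (G : DGraph) : ℕ → List (ℕ × Option ℕ) → ℕ → Prop
  | v, [], t => v = t
  | v, e :: rest, t => e.1 = v ∧ ∃ w, (v, e.2, w) ∈ G.edges ∧ chainFrom G w rest t

/-- A complete path: from the root to a terminal node; it is recorded by the list of
its working nodes with the labels of the edges taken, together with its terminal node. -/
def IsCompletePath (G : DGraph) (p : List (ℕ × Option ℕ)) (t : ℕ) : Prop :=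
  G.chainFrom G.root p t ∧ G.IsTerminal t ∧ t < G.n

/-- K(ξ): the equation system associated with a complete path. -/
def pathEqs (G : DGraph) (p : List (ℕ × Option ℕ)) : Finset (ℕ × Option ℕ) :=
  (p.filterMap fun e =>
    Sum.elim (fun a => some (a, e.2)) (fun _ => none) (G.label e.1)).toFinset

/-- L(Γ): the number of nodes. -/
def size (G : DGraph) : ℕ := G.n

/-- T(Γ): the number of terminal nodes labeled with pairwise different sets of rules. -/
def tCount (G : DGraph) : ℕ :=
  (((Finset.range G.n).filter fun v => G.IsTerminal v).image fun v => G.termSet v).card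

/-- h(Γ): the maximum number of working nodes on a complete path. -/
def depth (G : DGraph) : ℕ :=
  sSup {m | ∃ p t, G.IsCompletePath p t ∧ p.length = m}

/-- Path conditions for (the solutions of) the problems All Rules / EAll Rules. -/
def SolvesAR (G : DGraph) (S : Finset Rule) : Prop :=
  ∀ p t, G.IsCompletePath p t → ConsistentE (G.pathEqs p) →
    (∀ r ∈ G.termSet t, liftK r.K ⊆ G.pathEqs p) ∧
    (∀ r ∈ S, r ∉ G.termSet t → ¬ ConsistentE (liftK r.K ∪ G.pathEqs p))

/-- Path conditions for the problems All Decisions / EAll Decisions. -/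
def SolvesAD (G : DGraph) (S : Finset Rule) : Prop :=
  ∀ p t, G.IsCompletePath p t → ConsistentE (G.pathEqs p) →
    (∀ r ∈ G.termSet t, liftK r.K ⊆ G.pathEqs p) ∧
    (∀ r ∈ S, r ∉ G.termSet t → r.rhs ∉ (G.termSet t).image Rule.rhs →
      ¬ ConsistentE (liftK r.K ∪ G.pathEqs p))

/-- Path conditions for the problems Some Rules / ESome Rules. -/
def SolvesSR (G : DGraph) (S : Finset Rule) : Prop :=
  ∀ p t, G.IsCompletePath p t → ConsistentE (G.pathEqs p) →
    (∀ r ∈ G.termSet t, liftK r.K ⊆ G.pathEqs p) ∧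
    (G.termSet t = ∅ → ∀ r ∈ S, ¬ ConsistentE (liftK r.K ∪ G.pathEqs p))

end DGraph

/-- Γ is a decision tree over S solving AR(S) (an o-tree). -/
def TreeSolvesAR (S : Finset Rule) (G : DGraph) : Prop :=
  G.IsDG S false ∧ G.IsTree ∧ G.SolvesAR S
/-- Γ is a decision tree over S solving EAR(S) (an e-tree). -/
def TreeSolvesEAR (S : Finset Rule) (G : DGraph) : Prop :=
  G.IsDG S true ∧ G.IsTree ∧ G.SolvesAR S
/-- Γ is a decision tree over S solving AD(S) (an o-tree). -/
def TreeSolvesAD (S : Finset Rule) (G : DGraph) : Prop :=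
  G.IsDG S false ∧ G.IsTree ∧ G.SolvesAD S
/-- Γ is a decision tree over S solving EAD(S) (an e-tree). -/
def TreeSolvesEAD (S : Finset Rule) (G : DGraph) : Prop :=
  G.IsDG S true ∧ G.IsTree ∧ G.SolvesAD S
/-- Γ is a decision tree over S solving SR(S) (an o-tree). -/
def TreeSolvesSR (S : Finset Rule) (G : DGraph) : Prop :=
  G.IsDG S false ∧ G.IsTree ∧ G.SolvesSR S
/-- Γ is a decision tree over S solving ESR(S) (an e-tree). -/
def TreeSolvesESR (S : Finset Rule) (G : DGraph) : Prop :=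
  G.IsDG S true ∧ G.IsTree ∧ G.SolvesSR S

/-- L_AR(S): minimum number of nodes of a decision tree over S solving AR(S). -/
def L_AR (S : Finset Rule) : ℕ := sInf {m | ∃ G : DGraph, TreeSolvesAR S G ∧ G.size = m}
def L_EAR (S : Finset Rule) : ℕ := sInf {m | ∃ G : DGraph, TreeSolvesEAR S G ∧ G.size = m}
def L_AD (S : Finset Rule) : ℕ := sInf {m | ∃ G : DGraph, TreeSolvesAD S G ∧ G.size = m}
def L_EAD (S : Finset Rule) : ℕ := sInf {m | ∃ G : DGraph, TreeSolvesEAD S G ∧ G.size = m}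
def L_SR (S : Finset Rule) : ℕ := sInf {m | ∃ G : DGraph, TreeSolvesSR S G ∧ G.size = m}
def L_ESR (S : Finset Rule) : ℕ := sInf {m | ∃ G : DGraph, TreeSolvesESR S G ∧ G.size = m}

/-- T_AR(S): minimum number of differently-labeled terminal nodes of a decision tree
over S solving AR(S); similarly for the other problems. -/
def T_AR (S : Finset Rule) : ℕ := sInf {m | ∃ G : DGraph, TreeSolvesAR S G ∧ G.tCount = m}
def T_EAR (S : Finset Rule) : ℕ := sInf {m | ∃ G : DGraph, TreeSolvesEAR S G ∧ G.tCount = m}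
def T_AD (S : Finset Rule) : ℕ := sInf {m | ∃ G : DGraph, TreeSolvesAD S G ∧ G.tCount = m}
def T_EAD (S : Finset Rule) : ℕ := sInf {m | ∃ G : DGraph, TreeSolvesEAD S G ∧ G.tCount = m}
def T_SR (S : Finset Rule) : ℕ := sInf {m | ∃ G : DGraph, TreeSolvesSR S G ∧ G.tCount = m}
def T_ESR (S : Finset Rule) : ℕ := sInf {m | ∃ G : DGraph, TreeSolvesESR S G ∧ G.tCount = m}

/-- h_AR(S): minimum depth of a decision tree over S solving AR(S); similarly for the others. -/
def h_AR (S : Finset Rule) : ℕ := sInf {m | ∃ G : DGraph, TreeSolvesAR S G ∧ G.depth = m}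
def h_EAR (S : Finset Rule) : ℕ := sInf {m | ∃ G : DGraph, TreeSolvesEAR S G ∧ G.depth = m}
def h_AD (S : Finset Rule) : ℕ := sInf {m | ∃ G : DGraph, TreeSolvesAD S G ∧ G.depth = m}
def h_EAD (S : Finset Rule) : ℕ := sInf {m | ∃ G : DGraph, TreeSolvesEAD S G ∧ G.depth = m}
def h_SR (S : Finset Rule) : ℕ := sInf {m | ∃ G : DGraph, TreeSolvesSR S G ∧ G.depth = m}
def h_ESR (S : Finset Rule) : ℕ := sInf {m | ∃ G : DGraph, TreeSolvesESR S G ∧ G.depth = m}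

/-- L^DG_SR(S): minimum number of nodes of an acyclic decision graph solving SR(S). -/
def LDG_SR (S : Finset Rule) : ℕ :=
  sInf {m | ∃ G : DGraph, G.IsDG S false ∧ G.SolvesSR S ∧ G.size = m}
/-- L^DG_ESR(S): minimum number of nodes of an acyclic decision graph solving ESR(S). -/
def LDG_ESR (S : Finset Rule) : ℕ :=
  sInf {m | ∃ G : DGraph, G.IsDG S true ∧ G.SolvesSR S ∧ G.size = m}

/-- A node cover of the hypergraph G(S). -/
def IsNodeCover (S : Finset Rule) (B : Finset ℕ) : Prop :=
  B ⊆ attrs S ∧ ∀ r ∈ S, (Rule.attrs r).Nonempty → (Rule.attrs r ∩ B).Nonempty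

/-- β(S): the minimum cardinality of a node cover of the hypergraph G(S). -/
def beta (S : Finset Rule) : ℕ := sInf {c | ∃ B, IsNodeCover S B ∧ B.card = c}

/-- S⁺: the subsystem of S consisting of all rules of length d(S). -/
def Splus (S : Finset Rule) : Finset Rule := S.filter fun r => r.len = dPar S

/-- β⁺(S) = β(S⁺). -/
def betaPlus (S : Finset Rule) : ℕ := beta (Splus S)

/-- The rule r_α : delete from the left-hand side of r all equations belonging to α. -/
def Rule.restrict (r : Rule) (α : Finset (ℕ × Option ℕ)) : Rule :=
  ⟨r.K.filter fun p => (p.1, some p.2) ∉ α, r.rhs⟩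

/-- S_α : the system of the rules r_α for all r ∈ S with K(r) ∪ α consistent. -/
def restrict (S : Finset Rule) (α : Finset (ℕ × Option ℕ)) : Finset Rule :=
  (S.filter fun r => ConsistentE (liftK r.K ∪ α)).image fun r => r.restrict α

/-- E_C(S): consistent equation systems whose attributes are in A(S) and whose
values belong to V_S (ext = false) resp. EV_S (ext = true). -/
def ESys (S : Finset Rule) (ext : Bool) : Set (Finset (ℕ × Option ℕ)) :=
  {α | ConsistentE α ∧ ∀ p ∈ α, p.1 ∈ attrs S ∧ p.2 ∈ allowed S ext p.1}

/-- I_SR(S). -/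
def I_SR (S : Finset Rule) : Finset Rule :=
  if ∃ r ∈ S, r.len = 0 then S.filter fun r => r.len = 0 else S

/-- D₀(S): the right-hand sides of the rules of S of length 0. -/
def D0 (S : Finset Rule) : Finset ℕ := (S.filter fun r => r.len = 0).image Rule.rhs

/-- I_AD(S). -/
def I_AD (S : Finset Rule) : Finset Rule :=
  S.filter fun r => r.len = 0 ∨ r.rhs ∉ D0 S

def betaC (S : Finset Rule) (ext : Bool) : ℕ :=
  sSup {b | ∃ α ∈ ESys S ext, beta (restrict S α) = b}
def betaCplus (S : Finset Rule) (ext : Bool) : ℕ :=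
  sSup {b | ∃ α ∈ ESys S ext, betaPlus (restrict S α) = b}
def betaI (S : Finset Rule) (I : Finset Rule → Finset Rule) : ℕ :=
  sSup {b | ∃ α ∈ ESys S true, beta (I (restrict S α)) = b}
def betaIplus (S : Finset Rule) (I : Finset Rule → Finset Rule) : ℕ :=
  sSup {b | ∃ α ∈ ESys S true, betaPlus (I (restrict S α)) = b}

def beta_AR (S : Finset Rule) : ℕ := betaC S false
def beta_AD (S : Finset Rule) : ℕ := betaC S false
def beta_SR (S : Finset Rule) : ℕ := betaC S false
def beta_EAR (S : Finset Rule) : ℕ := betaC S true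
def beta_ARplus (S : Finset Rule) : ℕ := betaCplus S false
def beta_ADplus (S : Finset Rule) : ℕ := betaCplus S false
def beta_SRplus (S : Finset Rule) : ℕ := betaCplus S false
def beta_EARplus (S : Finset Rule) : ℕ := betaCplus S true
def beta_EAD (S : Finset Rule) : ℕ := betaI S I_AD
def beta_EADplus (S : Finset Rule) : ℕ := betaIplus S I_AD
def beta_ESR (S : Finset Rule) : ℕ := betaI S I_SR
def beta_ESRplus (S : Finset Rule) : ℕ := betaIplus S I_SR

/-- R_SR(S). -/
def R_SR (S : Finset Rule) : Finset Rule :=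
  S.filter fun r => ¬ ∃ r' ∈ S, r'.K ⊂ r.K

/-- R_AD(S). -/
def R_AD (S : Finset Rule) : Finset Rule :=
  S.filter fun r => ¬ ∃ r' ∈ S, r'.K ⊂ r.K ∧ r'.rhs = r.rhs

/-- A reduced decision rule system. -/
def Reduced (S : Finset Rule) : Prop :=
  attrs S ⊆ Finset.range (nPar S + 1) ∧
  rhsSet S ⊆ Finset.range ((rhsSet S).card + 1) ∧
  (∀ i ∈ attrs S, VS S i ⊆ Finset.range (kPar S + 1)) ∧
  1 ≤ dPar S

/-- Length of the binary representation of a natural number. -/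
def bitLen (m : ℕ) : ℕ := max 1 (Nat.size m)

/-- The length of the word "(a⟨i⟩=⟨δ⟩)" encoding one equation. -/
def eqLen (p : ℕ × ℕ) : ℕ := 4 + bitLen p.1 + bitLen p.2

/-- The length of the word encoding one rule (with the "∧" signs and "→"). -/
def Rule.wordLen (r : Rule) : ℕ :=
  (∑ p ∈ r.K, eqLen p) + (r.K.card - 1) + 1 + bitLen r.rhs

/-- size(S): the length of the word representing S (with ";" separating the rules). -/
def sizeS (S : Finset Rule) : ℕ := (∑ r ∈ S, r.wordLen) + (S.card - 1)

/- The greedy tree. At a node whose path has fixed the equation system `α`, let `T = I_C(S_α)`.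
If `d(T) = 0` the node is terminal and is labeled by the rules realized by `α`; otherwise it
queries an attribute `a` of a minimum node cover `B` of `T⁺`. After any answer `d(T)` does not
grow, and if it stays the same then `B \ {a}` still covers the new `T⁺`, since a longest rule
containing `a` loses its equation on `a`. So `(d(T) - 1)·β_C⁺(S) + β⁺(T)` strictly decreases
along every edge, and at the root it is at most `d(I_C(S))·β_C⁺(S)`. -/

open Finset

lemma ConsistentE.mono {E E' : Finset (ℕ × Option ℕ)} (h : E ⊆ E') (hE' : ConsistentE E') :
    ConsistentE E := fun p hp q hq => hE' p (h hp) q (h hq)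

lemma ConsistentE.insert {α : Finset (ℕ × Option ℕ)} {a : ℕ} {l : Option ℕ}
    (hα : ConsistentE α) (ha : ∀ v, (a, v) ∉ α) : ConsistentE (insert (a, l) α) := by
  rintro ⟨i, v⟩ hp ⟨j, w⟩ hq (rfl : i = j)
  rcases mem_insert.1 hp with hp | hp <;> rcases mem_insert.1 hq with hq | hq
  · simp_all
  · cases hp; exact absurd hq (ha w)
  · cases hq; exact absurd hp (ha v)
  · exact hα _ hp _ hq rfl

lemma mem_liftK {K : Finset (ℕ × ℕ)} {i : ℕ} {v : Option ℕ} :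
    (i, v) ∈ liftK K ↔ ∃ δ, (i, δ) ∈ K ∧ v = some δ := by
  simp only [liftK, mem_image, Prod.ext_iff, Prod.exists]
  constructor
  · rintro ⟨i', δ, h, rfl, rfl⟩; exact ⟨δ, h, rfl⟩
  · rintro ⟨δ, h, rfl⟩; exact ⟨i, δ, h, rfl, rfl⟩

lemma consistentE_liftK {r : Rule} (hwf : r.WF) : ConsistentE (liftK r.K) := by
  rintro ⟨i, v⟩ hp ⟨j, w⟩ hq (rfl : i = j)
  obtain ⟨δ, hδ, rfl⟩ := mem_liftK.1 hp
  obtain ⟨δ', hδ', rfl⟩ := mem_liftK.1 hq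
  cases hwf _ hδ _ hδ' rfl
  rfl

@[simp] lemma Rule.restrict_K (r : Rule) (α : Finset (ℕ × Option ℕ)) :
    (r.restrict α).K = r.K.filter fun p => (p.1, some p.2) ∉ α := rfl

lemma Rule.restrict_empty (r : Rule) : r.restrict ∅ = r := by
  cases r
  simp [Rule.restrict]

lemma Rule.restrict_K_anti (r : Rule) {α α' : Finset (ℕ × Option ℕ)} (h : α ⊆ α') :
    (r.restrict α').K ⊆ (r.restrict α).K := by
  intro p hp
  simp only [restrict_K, mem_filter] at hp ⊢
  exact ⟨hp.1, fun hα => hp.2 (h hα)⟩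

lemma Rule.len_restrict_anti (r : Rule) {α α' : Finset (ℕ × Option ℕ)} (h : α ⊆ α') :
    (r.restrict α').len ≤ (r.restrict α).len :=
  card_le_card (r.restrict_K_anti h)

lemma Rule.len_restrict_eq_zero_iff {r : Rule} {α : Finset (ℕ × Option ℕ)} :
    (r.restrict α).len = 0 ↔ liftK r.K ⊆ α := by
  simp only [Rule.len, restrict_K, card_eq_zero, filter_eq_empty_iff, not_not]
  constructor
  · rintro h ⟨i, v⟩ hp
    obtain ⟨δ, hδ, rfl⟩ := mem_liftK.1 hp
    exact h hδ
  · exact fun h p hp => h (mem_liftK.2 ⟨p.2, hp, rfl⟩)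

lemma Rule.attrs_nonempty_of_len_pos {r : Rule} (h : 0 < r.len) : r.attrs.Nonempty :=
  (card_pos.1 h).image _

lemma Rule.attrs_restrict_subset (r : Rule) (α : Finset (ℕ × Option ℕ)) :
    (r.restrict α).attrs ⊆ r.attrs :=
  image_subset_image (filter_subset _ _)

lemma Rule.attrs_restrict_erase_subset (r : Rule) (α : Finset (ℕ × Option ℕ)) (a : ℕ)
    (l : Option ℕ) : (r.restrict α).attrs.erase a ⊆ (r.restrict (insert (a, l) α)).attrs := by
  intro b hb
  obtain ⟨hba, hb⟩ := mem_erase.1 hb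
  obtain ⟨p, hp, rfl⟩ := mem_image.1 hb
  refine mem_image.2 ⟨p, ?_, rfl⟩
  simp only [restrict_K, mem_filter, mem_insert, not_or] at hp ⊢
  exact ⟨hp.1, fun h => hba (congrArg Prod.fst h), hp.2⟩

lemma Rule.len_restrict_insert_lt {r : Rule} {α : Finset (ℕ × Option ℕ)} {a : ℕ}
    {l : Option ℕ} (hcons : ConsistentE (liftK r.K ∪ insert (a, l) α))
    (ha : a ∈ (r.restrict α).attrs) :
    (r.restrict (insert (a, l) α)).len < (r.restrict α).len := by
  obtain ⟨p, hp, rfl⟩ := mem_image.1 ha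
  have hpα := (mem_filter.1 hp).2
  have hpl : some p.2 = l :=
    hcons _ (mem_union_left _ (mem_liftK.2 ⟨p.2, (mem_filter.1 hp).1, rfl⟩))
      _ (mem_union_right _ (mem_insert_self _ _)) rfl
  refine card_lt_card ⟨r.restrict_K_anti (subset_insert _ _), fun h => ?_⟩
  have := (mem_filter.1 (h hp)).2
  simp [hpl] at this

lemma mem_restrict {S : Finset Rule} {α : Finset (ℕ × Option ℕ)} {r' : Rule} :
    r' ∈ restrict S α ↔ ∃ r ∈ S, ConsistentE (liftK r.K ∪ α) ∧ r.restrict α = r' := by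
  simp only [restrict, mem_image, mem_filter, and_assoc]

lemma restrict_empty {S : Finset Rule} (hwf : ∀ r ∈ S, r.WF) : restrict S ∅ = S := by
  ext r
  simp only [mem_restrict, union_empty, Rule.restrict_empty]
  exact ⟨fun ⟨r, hr, _, h⟩ => h ▸ hr, fun hr => ⟨r, hr, consistentE_liftK (hwf r hr), rfl⟩⟩

lemma attrs_mono {T T' : Finset Rule} (h : T ⊆ T') : attrs T ⊆ attrs T' :=
  biUnion_subset_biUnion_of_subset_left _ h

lemma attrs_restrict_subset (S : Finset Rule) (α : Finset (ℕ × Option ℕ)) :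
    attrs (restrict S α) ⊆ attrs S := by
  intro i hi
  obtain ⟨r', hr', hi⟩ := mem_biUnion.1 hi
  obtain ⟨r, hr, -, rfl⟩ := mem_restrict.1 hr'
  exact mem_biUnion.2 ⟨r, hr, r.attrs_restrict_subset α hi⟩

/-- Consistency with `α` means that every equation on an attribute of `α` is deleted in `r_α`. -/
lemma notMem_of_mem_attrs_restrict {S : Finset Rule} {α : Finset (ℕ × Option ℕ)} {i : ℕ}
    (hi : i ∈ attrs (restrict S α)) (v : Option ℕ) : (i, v) ∉ α := by
  intro hv
  obtain ⟨r', hr', hir⟩ := mem_biUnion.1 hi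
  obtain ⟨r, -, hcons, rfl⟩ := mem_restrict.1 hr'
  obtain ⟨p, hp, rfl⟩ := mem_image.1 hir
  obtain ⟨hpK, hpα⟩ := mem_filter.1 hp
  have : some p.2 = v := hcons _ (mem_union_left _ (mem_liftK.2 ⟨p.2, hpK, rfl⟩))
    _ (mem_union_right _ hv) rfl
  exact hpα (this ▸ hv)

lemma D0_restrict_mono {S : Finset Rule} {α α' : Finset (ℕ × Option ℕ)} (hsub : α ⊆ α')
    (hcons : ConsistentE α') : D0 (restrict S α) ⊆ D0 (restrict S α') := by
  intro d hd
  simp only [D0, mem_image, mem_filter] at hd ⊢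
  obtain ⟨r', ⟨hr', hlen⟩, rfl⟩ := hd
  obtain ⟨r, hrS, -, rfl⟩ := mem_restrict.1 hr'
  have hK : liftK r.K ⊆ α' := (Rule.len_restrict_eq_zero_iff.1 hlen).trans hsub
  have hcons' : ConsistentE (liftK r.K ∪ α') := by rwa [union_eq_right.2 hK]
  exact ⟨r.restrict α', ⟨mem_restrict.2 ⟨r, hrS, hcons', rfl⟩,
    Rule.len_restrict_eq_zero_iff.2 hK⟩, rfl⟩

lemma isNodeCover_attrs (T : Finset Rule) : IsNodeCover T (attrs T) :=
  ⟨subset_rfl, fun r hr ⟨i, hi⟩ => ⟨i, mem_inter.2 ⟨hi, mem_biUnion.2 ⟨r, hr, hi⟩⟩⟩⟩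

lemma exists_isNodeCover_card_eq_beta (T : Finset Rule) :
    ∃ B, IsNodeCover T B ∧ B.card = beta T :=
  Nat.sInf_mem (s := {c | ∃ B, IsNodeCover T B ∧ B.card = c})
    ⟨_, attrs T, isNodeCover_attrs T, rfl⟩

lemma beta_le_card {T : Finset Rule} {B : Finset ℕ} (h : IsNodeCover T B) : beta T ≤ B.card :=
  Nat.sInf_le ⟨B, h, rfl⟩

lemma mem_Splus {T : Finset Rule} {r : Rule} : r ∈ Splus T ↔ r ∈ T ∧ r.len = dPar T :=
  mem_filter

lemma one_le_betaPlus {T : Finset Rule} (h : 0 < dPar T) : 1 ≤ betaPlus T := by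
  have hT : T.Nonempty := nonempty_of_ne_empty (by rintro rfl; simp_all [dPar])
  obtain ⟨r, hr, hlen⟩ := exists_mem_eq_sup T hT Rule.len
  obtain ⟨B, hB, hcard⟩ := exists_isNodeCover_card_eq_beta (Splus T)
  obtain ⟨i, hi⟩ := hB.2 r (mem_Splus.2 ⟨hr, hlen.symm⟩)
    (Rule.attrs_nonempty_of_len_pos (hlen ▸ h))
  rw [betaPlus, ← hcard]
  exact card_pos.2 ⟨i, (mem_inter.1 hi).2⟩

/-- The properties of `I ∈ {I_AD, I_SR}` on which the greedy construction relies. -/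
structure AdmissibleReduction (I : Finset Rule → Finset Rule) : Prop where
  subset : ∀ T, I T ⊆ T
  mem_of_restrict : ∀ (S : Finset Rule) (α α' : Finset (ℕ × Option ℕ)), α ⊆ α' →
    ConsistentE α' → ∀ r ∈ S, ConsistentE (liftK r.K ∪ α') →
      r.restrict α' ∈ I (restrict S α') → 0 < (r.restrict α').len →
      r.restrict α ∈ I (restrict S α)

lemma admissibleReduction_I_AD : AdmissibleReduction I_AD where
  subset _ := filter_subset _ _
  mem_of_restrict S α α' hsub hcons r hrS hcons' hmem hlen := by
    refine mem_filter.2 ⟨mem_restrict.2 ⟨r, hrS, hcons'.mono (union_subset_union_right hsub),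
      rfl⟩, ?_⟩
    rcases (mem_filter.1 hmem).2 with h0 | hD0
    · omega
    · exact Or.inr fun h => hD0 (D0_restrict_mono hsub hcons h)

lemma admissibleReduction_I_SR : AdmissibleReduction I_SR where
  subset T := by unfold I_SR; split <;> [exact filter_subset _ _; exact subset_rfl]
  mem_of_restrict S α α' hsub hcons r hrS hcons' hmem hlen := by
    have hmemα : r.restrict α ∈ restrict S α :=
      mem_restrict.2 ⟨r, hrS, hcons'.mono (union_subset_union_right hsub), rfl⟩
    rw [I_SR, if_neg]
    · exact hmemα
    -- a rule realized by `α` is realized by `α'`, and then `I_SR` keeps only length-0 rules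
    rintro ⟨r0', hr0', hlen0⟩
    obtain ⟨r0, hr0S, -, rfl⟩ := mem_restrict.1 hr0'
    have hK : liftK r0.K ⊆ α' := (Rule.len_restrict_eq_zero_iff.1 hlen0).trans hsub
    have hr0' : r0.restrict α' ∈ restrict S α' :=
      mem_restrict.2 ⟨r0, hr0S, by rwa [union_eq_right.2 hK], rfl⟩
    rw [I_SR, if_pos ⟨_, hr0', Rule.len_restrict_eq_zero_iff.2 hK⟩, mem_filter] at hmem
    omega

namespace AdmissibleReduction

variable {I : Finset Rule → Finset Rule} (hI : AdmissibleReduction I) {S : Finset Rule}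
include hI

lemma attrs_subset (α : Finset (ℕ × Option ℕ)) : attrs (I (restrict S α)) ⊆ attrs S :=
  (attrs_mono (hI.subset _)).trans (attrs_restrict_subset S α)

lemma dPar_restrict_anti {α α' : Finset (ℕ × Option ℕ)} (hsub : α ⊆ α')
    (hcons : ConsistentE α') : dPar (I (restrict S α')) ≤ dPar (I (restrict S α)) := by
  refine Finset.sup_le fun r' hr' => ?_
  obtain h0 | hpos := Nat.eq_zero_or_pos r'.len
  · omega
  obtain ⟨r, hrS, hcons', rfl⟩ := mem_restrict.1 (hI.subset _ hr')
  exact (r.len_restrict_anti hsub).trans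
    (le_sup (hI.mem_of_restrict S α α' hsub hcons r hrS hcons' hr' hpos))

lemma betaPlus_le_betaIplus {α : Finset (ℕ × Option ℕ)} (hα : α ∈ ESys S true) :
    betaPlus (I (restrict S α)) ≤ betaIplus S I := by
  refine le_csSup ⟨(attrs S).card, ?_⟩ ⟨α, hα, rfl⟩
  rintro _ ⟨α, -, rfl⟩
  exact (beta_le_card (isNodeCover_attrs _)).trans
    (card_le_card ((attrs_mono (filter_subset _ _)).trans (hI.attrs_subset α)))

/-- A longest rule of the new system that only `a` covered would have lost its equation on `a`,
and would be shorter. -/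
lemma isNodeCover_erase {α : Finset (ℕ × Option ℕ)} {a : ℕ} {l : Option ℕ} {B : Finset ℕ}
    (hcons : ConsistentE (insert (a, l) α)) (hB : IsNodeCover (Splus (I (restrict S α))) B)
    (hd : dPar (I (restrict S (insert (a, l) α))) = dPar (I (restrict S α))) :
    IsNodeCover (Splus (I (restrict S (insert (a, l) α))))
      (B.erase a ∩ attrs (Splus (I (restrict S (insert (a, l) α))))) := by
  refine ⟨inter_subset_right, fun r' hr' hne => ?_⟩
  obtain ⟨hr'I, hr'len⟩ := mem_Splus.1 hr'
  obtain ⟨r, hrS, hcons', rfl⟩ := mem_restrict.1 (hI.subset _ hr'I)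
  have hpos : 0 < (r.restrict (insert (a, l) α)).len := card_pos.2 (image_nonempty.1 hne)
  have hmemα : r.restrict α ∈ I (restrict S α) :=
    hI.mem_of_restrict S α _ (subset_insert _ _) hcons r hrS hcons' hr'I hpos
  have hlenα : (r.restrict α).len = dPar (I (restrict S α)) :=
    le_antisymm (le_sup hmemα) (hd ▸ hr'len ▸ r.len_restrict_anti (subset_insert _ _))
  obtain ⟨b, hb⟩ := hB.2 _ (mem_Splus.2 ⟨hmemα, hlenα⟩) (Rule.attrs_nonempty_of_len_pos (by omega))
  obtain ⟨hbr, hbB⟩ := mem_inter.1 hb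
  have hba : b ≠ a := by
    rintro rfl
    have := Rule.len_restrict_insert_lt hcons' hbr
    omega
  have hbr' := r.attrs_restrict_erase_subset α a l (mem_erase.2 ⟨hba, hbr⟩)
  exact ⟨b, mem_inter.2 ⟨hbr', mem_inter.2 ⟨mem_erase.2 ⟨hba, hbB⟩, mem_biUnion.2 ⟨_, hr', hbr'⟩⟩⟩⟩

end AdmissibleReduction

lemma _root_.List.finite_length_le_of_forall_mem {β : Type*} (T : Finset β) (n : ℕ) :
    {E : List β | E.length ≤ n ∧ ∀ e ∈ E, e ∈ T}.Finite := by
  refine ((List.finite_length_le T n).image (List.map Subtype.val)).subset ?_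
  rintro E ⟨hlen, hT⟩
  exact ⟨E.pmap Subtype.mk hT, by simpa using hlen, by simp [List.map_pmap]⟩

section Enumeration

variable {β : Type*} (N : Finset β)

def elemAt [Inhabited β] (v : ℕ) : β :=
  if h : v < N.card then (N.equivFin.symm ⟨v, h⟩ : β) else default

def indexOf (x : β) : ℕ := if h : x ∈ N then N.equivFin ⟨x, h⟩ else 0

lemma indexOf_lt {N : Finset β} {x : β} (h : x ∈ N) : indexOf N x < N.card := by
  rw [indexOf, dif_pos h]
  exact Fin.isLt _

variable [Inhabited β] {N}

lemma elemAt_indexOf {x : β} (h : x ∈ N) : elemAt N (indexOf N x) = x := by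
  simp [elemAt, indexOf, h]

lemma elemAt_mem {v : ℕ} (h : v < N.card) : elemAt N v ∈ N := by
  rw [elemAt, dif_pos h]
  exact Subtype.coe_prop _

lemma indexOf_elemAt {v : ℕ} (h : v < N.card) : indexOf N (elemAt N v) = v := by
  simp [elemAt, h, indexOf]

lemma elemAt_injOn {v w : ℕ} (hv : v < N.card) (hw : w < N.card)
    (h : elemAt N v = elemAt N w) : v = w := by
  rw [← indexOf_elemAt hv, ← indexOf_elemAt hw, h]

end Enumeration

def IsQueryStrategy (S : Finset Rule) (σ : Finset (ℕ × Option ℕ) → Option ℕ) : Prop :=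
  ∀ α a, σ α = some a → a ∈ attrs S ∧ ∀ v, (a, v) ∉ α

/-- The nodes of the decision tree of `σ`: the answer sequences it admits, most recent first. -/
inductive IsRun (S : Finset Rule) (σ : Finset (ℕ × Option ℕ) → Option ℕ) :
    List (ℕ × Option ℕ) → Prop
  | nil : IsRun S σ []
  | cons {E : List (ℕ × Option ℕ)} {a : ℕ} {l : Option ℕ} :
      IsRun S σ E → σ E.toFinset = some a → l ∈ allowed S true a → IsRun S σ ((a, l) :: E)

def admissibleEqs (S : Finset Rule) : Finset (ℕ × Option ℕ) :=
  (attrs S).biUnion fun a => (allowed S true a).image (Prod.mk a)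

lemma mem_admissibleEqs {S : Finset Rule} {e : ℕ × Option ℕ} :
    e ∈ admissibleEqs S ↔ e.1 ∈ attrs S ∧ e.2 ∈ allowed S true e.1 := by
  obtain ⟨a, l⟩ := e
  simp [admissibleEqs]

def runs (S : Finset Rule) (σ : Finset (ℕ × Option ℕ) → Option ℕ) :
    Finset (List (ℕ × Option ℕ)) :=
  ((List.finite_length_le_of_forall_mem (admissibleEqs S) (attrs S).card).toFinset).filter
    (IsRun S σ)

def realizedRules (S : Finset Rule) (α : Finset (ℕ × Option ℕ)) : Finset Rule :=
  S.filter fun r => liftK r.K ⊆ α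

lemma mem_realizedRules {S : Finset Rule} {α : Finset (ℕ × Option ℕ)} {r : Rule} :
    r ∈ realizedRules S α ↔ r ∈ S ∧ liftK r.K ⊆ α :=
  mem_filter

def strategyTree (S : Finset Rule) (σ : Finset (ℕ × Option ℕ) → Option ℕ) : DGraph where
  n := (runs S σ).card
  root := indexOf (runs S σ) []
  label v := (σ (elemAt (runs S σ) v).toFinset).elim
    (.inr (realizedRules S (elemAt (runs S σ) v).toFinset)) .inl
  edges := ((range (runs S σ).card) ×ˢ ((attrs S).biUnion (allowed S true) ×ˢ
      range (runs S σ).card)).filter fun e => ∃ a, σ (elemAt (runs S σ) e.1).toFinset = some a ∧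
    e.2.1 ∈ allowed S true a ∧ elemAt (runs S σ) e.2.2 = (a, e.2.1) :: elemAt (runs S σ) e.1

section StrategyTree

variable {S : Finset Rule} {σ : Finset (ℕ × Option ℕ) → Option ℕ}

namespace IsRun

lemma length_add_le {E : List (ℕ × Option ℕ)} (h : IsRun S σ E)
    (Φ : Finset (ℕ × Option ℕ) → ℕ) (hΦ : ∀ E a l, IsRun S σ ((a, l) :: E) →
      σ E.toFinset = some a → Φ (insert (a, l) E.toFinset) < Φ E.toFinset) :
    E.length + Φ E.toFinset ≤ Φ ∅ := by
  induction h with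
  | nil => simp
  | @cons E a l hE ha hl ih =>
    have := hΦ E a l (hE.cons ha hl) ha
    simp only [List.length_cons, List.toFinset_cons]
    omega

variable (hσ : IsQueryStrategy S σ)
include hσ

lemma mem_ESys {E : List (ℕ × Option ℕ)} (h : IsRun S σ E) : E.toFinset ∈ ESys S true := by
  induction h with
  | nil => exact ⟨by simp [ConsistentE], by simp⟩
  | @cons E a l _ ha hl ih =>
    rw [List.toFinset_cons]
    refine ⟨ConsistentE.insert ih.1 (hσ _ _ ha).2, fun p hp => ?_⟩
    rcases mem_insert.1 hp with rfl | hp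
    · exact ⟨(hσ _ _ ha).1, hl⟩
    · exact ih.2 p hp

lemma length_le {E : List (ℕ × Option ℕ)} (h : IsRun S σ E) : E.length ≤ (attrs S).card := by
  have hnodup : (E.map Prod.fst).Nodup := by
    induction h with
    | nil => exact List.nodup_nil
    | @cons E a l _ ha _ ih =>
      refine List.nodup_cons.2 ⟨fun hmem => ?_, ih⟩
      obtain ⟨⟨a', v⟩, hv, rfl⟩ := List.mem_map.1 hmem
      exact (hσ _ _ ha).2 v (List.mem_toFinset.2 hv)
  have hsub : (E.map Prod.fst).toFinset ⊆ attrs S := fun a ha => by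
    obtain ⟨p, hp, rfl⟩ := List.mem_map.1 (List.mem_toFinset.1 ha)
    exact ((h.mem_ESys hσ).2 p (List.mem_toFinset.2 hp)).1
  simpa [List.toFinset_card_of_nodup hnodup] using card_le_card hsub

end IsRun

namespace strategyTree

lemma label_of_some {v a : ℕ} (ha : σ (elemAt (runs S σ) v).toFinset = some a) :
    (strategyTree S σ).label v = .inl a := by
  simp [strategyTree, ha]

lemma label_of_none {v : ℕ} (h : σ (elemAt (runs S σ) v).toFinset = none) :
    (strategyTree S σ).label v = .inr (realizedRules S (elemAt (runs S σ) v).toFinset) := by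
  simp [strategyTree, h]

end strategyTree

variable (hσ : IsQueryStrategy S σ)
include hσ

lemma mem_runs {E : List (ℕ × Option ℕ)} : E ∈ runs S σ ↔ IsRun S σ E := by
  refine mem_filter.trans ⟨And.right, fun h => ⟨?_, h⟩⟩
  refine (Set.Finite.mem_toFinset _).2 ⟨h.length_le hσ, fun e he => ?_⟩
  exact mem_admissibleEqs.2 ((h.mem_ESys hσ).2 e (List.mem_toFinset.2 he))

namespace strategyTree

lemma isRun_elemAt {v : ℕ} (hv : v < (runs S σ).card) : IsRun S σ (elemAt (runs S σ) v) :=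
  (mem_runs hσ).1 (elemAt_mem hv)

lemma mem_edges {v w : ℕ} {l : Option ℕ} :
    (v, l, w) ∈ (strategyTree S σ).edges ↔ v < (runs S σ).card ∧ w < (runs S σ).card ∧
      ∃ a, σ (elemAt (runs S σ) v).toFinset = some a ∧ l ∈ allowed S true a ∧
        elemAt (runs S σ) w = (a, l) :: elemAt (runs S σ) v := by
  simp only [strategyTree, mem_filter, mem_product, mem_range, mem_biUnion]
  constructor
  · rintro ⟨⟨hv, -, hw⟩, h⟩
    exact ⟨hv, hw, h⟩
  · rintro ⟨hv, hw, a, ha, hl, h⟩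
    exact ⟨⟨hv, ⟨a, (hσ _ _ ha).1, hl⟩, hw⟩, a, ha, hl, h⟩

lemma mem_edges_of_some {v a : ℕ} {l : Option ℕ} (hv : v < (runs S σ).card)
    (ha : σ (elemAt (runs S σ) v).toFinset = some a) (hl : l ∈ allowed S true a) :
    (v, l, indexOf (runs S σ) ((a, l) :: elemAt (runs S σ) v)) ∈ (strategyTree S σ).edges := by
  have hmem := (mem_runs hσ).2 ((isRun_elemAt hσ hv).cons ha hl)
  exact (mem_edges hσ).2 ⟨hv, indexOf_lt hmem, a, ha, hl, elemAt_indexOf hmem⟩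

lemma isTerminal_iff {v : ℕ} (hv : v < (runs S σ).card) :
    (strategyTree S σ).IsTerminal v ↔ σ (elemAt (runs S σ) v).toFinset = none := by
  constructor
  · intro h
    by_contra hne
    obtain ⟨a, ha⟩ := Option.ne_none_iff_exists'.1 hne
    exact h _ (mem_edges_of_some hσ hv ha (l := none) (by simp [allowed])) rfl
  · rintro h ⟨v', l, w⟩ he rfl
    obtain ⟨-, -, a, ha, -⟩ := (mem_edges hσ).1 he
    simp [h] at ha

lemma acyclic : (strategyTree S σ).Acyclic := by
  have hstep : ∀ v w, (strategyTree S σ).step v w →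
      (elemAt (runs S σ) v).length < (elemAt (runs S σ) w).length := by
    rintro v w ⟨l, he⟩
    obtain ⟨-, -, a, -, -, h⟩ := (mem_edges hσ).1 he
    simp [h]
  intro v hv
  have : ∀ v w, Relation.TransGen (strategyTree S σ).step v w →
      (elemAt (runs S σ) v).length < (elemAt (runs S σ) w).length := by
    intro v w h
    induction h with
    | single h => exact hstep _ _ h
    | tail _ h ih => exact ih.trans (hstep _ _ h)
  exact lt_irrefl _ (this v v hv)

lemma isDG : (strategyTree S σ).IsDG S true := by
  refine ⟨indexOf_lt ((mem_runs hσ).2 .nil), fun ⟨v, l, w⟩ he => ?_, acyclic hσ, fun v hv => ?_⟩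
  · obtain ⟨hv, hw, -⟩ := (mem_edges hσ).1 he
    exact ⟨hv, hw⟩
  cases ha : σ (elemAt (runs S σ) v).toFinset with
  | none =>
    rw [if_pos ((isTerminal_iff hσ hv).2 ha)]
    exact ⟨_, label_of_none ha, filter_subset _ _⟩
  | some a =>
    rw [if_neg (by rw [isTerminal_iff hσ hv, ha]; simp)]
    refine ⟨a, label_of_some ha, (hσ _ _ ha).1, fun l => ⟨?_, ?_⟩, ?_⟩
    · rintro ⟨w, he⟩
      obtain ⟨-, -, a', ha', hl, -⟩ := (mem_edges hσ).1 he
      rwa [Option.some_inj.1 (ha.symm.trans ha')]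
    · exact fun hl => ⟨_, mem_edges_of_some hσ hv ha hl⟩
    · intro l w w' he he'
      obtain ⟨-, hw, a₁, ha₁, -, h⟩ := (mem_edges hσ).1 he
      obtain ⟨-, hw', a₂, ha₂, -, h'⟩ := (mem_edges hσ).1 he'
      rw [ha₁] at ha₂
      cases ha₂
      exact elemAt_injOn hw hw' (h.trans h'.symm)

/-- Since a node is the list of its answers, its parent is the node of the tail of that list. -/
lemma isTree : (strategyTree S σ).IsTree := by
  have hroot : [] ∈ runs S σ := (mem_runs hσ).2 .nil
  refine ⟨?_, fun w hw hne => ?_⟩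
  · rintro ⟨v, l, w⟩ he (hw : w = indexOf _ [])
    obtain ⟨-, -, a, -, -, h⟩ := (mem_edges hσ).1 he
    rw [hw, elemAt_indexOf hroot] at h
    exact List.cons_ne_nil _ _ h.symm
  rcases hE : elemAt (runs S σ) w with _ | ⟨⟨a, l⟩, E⟩
  · exact absurd (elemAt_injOn hw (indexOf_lt hroot) (by rw [hE, elemAt_indexOf hroot])) hne
  have hrun := isRun_elemAt hσ hw
  rw [hE] at hrun
  obtain _ | ⟨hErun, ha, hl⟩ := hrun
  have hmem := (mem_runs hσ).2 hErun
  refine ⟨(indexOf (runs S σ) E, l, w), ⟨?_, rfl⟩, ?_⟩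
  · refine (mem_edges hσ).2 ⟨indexOf_lt hmem, hw, a, ?_, hl, ?_⟩ <;> rw [elemAt_indexOf hmem]
    exacts [ha, hE]
  · rintro ⟨u, l', w'⟩ ⟨he, rfl : w' = w⟩
    obtain ⟨hu, -, a', -, -, h⟩ := (mem_edges hσ).1 he
    rw [hE] at h
    obtain ⟨⟨-, rfl⟩, hEu⟩ := List.cons_eq_cons.1 h
    rw [hEu, indexOf_elemAt hu]

end strategyTree

namespace strategyTree

lemma chainFrom {p : List (ℕ × Option ℕ)} {v t : ℕ} (hv : v < (runs S σ).card)
    (h : (strategyTree S σ).chainFrom v p t) :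
    t < (runs S σ).card ∧
      (elemAt (runs S σ) t).toFinset =
        (strategyTree S σ).pathEqs p ∪ (elemAt (runs S σ) v).toFinset ∧
      (elemAt (runs S σ) t).length = p.length + (elemAt (runs S σ) v).length := by
  induction p generalizing v with
  | nil =>
    obtain rfl : v = t := h
    simp [DGraph.pathEqs, hv]
  | cons e p ih =>
    obtain ⟨rfl, w, he, hchain⟩ := h
    obtain ⟨-, hw, a, ha, -, hvw⟩ := (mem_edges hσ).1 he
    obtain ⟨ht, heqs, hlen⟩ := ih hw hchain
    have hpe : (strategyTree S σ).pathEqs (e :: p) =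
        insert (a, e.2) ((strategyTree S σ).pathEqs p) := by
      simp [DGraph.pathEqs, label_of_some ha]
    refine ⟨ht, ?_, ?_⟩
    · rw [heqs, hvw, hpe, List.toFinset_cons, insert_union, union_insert]
    · rw [hlen, hvw]
      simp only [List.length_cons]
      omega

lemma exists_isRun_of_isCompletePath {p : List (ℕ × Option ℕ)} {t : ℕ}
    (h : (strategyTree S σ).IsCompletePath p t) :
    ∃ E, IsRun S σ E ∧ σ E.toFinset = none ∧ (strategyTree S σ).pathEqs p = E.toFinset ∧
      (strategyTree S σ).termSet t = realizedRules S E.toFinset ∧ p.length = E.length := by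
  obtain ⟨hchain, hterm, -⟩ := h
  have hroot : [] ∈ runs S σ := (mem_runs hσ).2 .nil
  obtain ⟨ht, heqs, hlen⟩ := chainFrom hσ (indexOf_lt hroot) hchain
  rw [elemAt_indexOf hroot] at heqs hlen
  have hnone := (isTerminal_iff hσ ht).1 hterm
  refine ⟨_, isRun_elemAt hσ ht, hnone, by simpa using heqs.symm, ?_, by simpa using hlen.symm⟩
  simp [DGraph.termSet, label_of_none hnone]

lemma depth_le (Φ : Finset (ℕ × Option ℕ) → ℕ) (hΦ : ∀ E a l, IsRun S σ ((a, l) :: E) →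
      σ E.toFinset = some a → Φ (insert (a, l) E.toFinset) < Φ E.toFinset) :
    (strategyTree S σ).depth ≤ Φ ∅ := by
  refine csSup_le' ?_
  rintro _ ⟨p, t, h, rfl⟩
  obtain ⟨E, hE, -, -, -, hlen⟩ := exists_isRun_of_isCompletePath hσ h
  have := hE.length_add_le Φ hΦ
  omega

lemma solvesAD (hleaf : ∀ α, σ α = none → ∀ r ∈ S, r ∉ realizedRules S α →
      r.rhs ∉ (realizedRules S α).image Rule.rhs → ¬ ConsistentE (liftK r.K ∪ α)) :
    (strategyTree S σ).SolvesAD S := by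
  intro p t h _
  obtain ⟨E, -, hnone, heqs, hterm, -⟩ := exists_isRun_of_isCompletePath hσ h
  rw [heqs, hterm]
  exact ⟨fun r hr => (mem_realizedRules.1 hr).2, hleaf _ hnone⟩

lemma solvesSR (hleaf : ∀ α, σ α = none → realizedRules S α = ∅ →
      ∀ r ∈ S, ¬ ConsistentE (liftK r.K ∪ α)) :
    (strategyTree S σ).SolvesSR S := by
  intro p t h _
  obtain ⟨E, -, hnone, heqs, hterm, -⟩ := exists_isRun_of_isCompletePath hσ h
  rw [heqs, hterm]
  exact ⟨fun r hr => (mem_realizedRules.1 hr).2, hleaf _ hnone⟩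

end strategyTree

end StrategyTree

section Greedy

variable (S : Finset Rule) (I : Finset Rule → Finset Rule)

def minNodeCover (T : Finset Rule) : Finset ℕ := (exists_isNodeCover_card_eq_beta T).choose

lemma minNodeCover_spec (T : Finset Rule) :
    IsNodeCover T (minNodeCover T) ∧ (minNodeCover T).card = beta T :=
  (exists_isNodeCover_card_eq_beta T).choose_spec

def greedyQuery (α : Finset (ℕ × Option ℕ)) : Option ℕ :=
  if dPar (I (restrict S α)) = 0 then none
  else (minNodeCover (Splus (I (restrict S α)))).toList.head?

/-- Lexicographic in `(d, β⁺)` of the current system `I(S_α)`, with `β⁺` weighted by its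
bound `β_C⁺(S)`. -/
def greedyPotential (α : Finset (ℕ × Option ℕ)) : ℕ :=
  if dPar (I (restrict S α)) = 0 then 0
  else (dPar (I (restrict S α)) - 1) * betaIplus S I + betaPlus (I (restrict S α))

variable {S I}

lemma greedyQuery_eq_none {α : Finset (ℕ × Option ℕ)} (h : greedyQuery S I α = none) :
    dPar (I (restrict S α)) = 0 := by
  by_contra hd
  rw [greedyQuery, if_neg hd, List.head?_eq_none_iff, toList_eq_nil] at h
  have := one_le_betaPlus (Nat.pos_of_ne_zero hd)
  rw [betaPlus, ← (minNodeCover_spec _).2, h] at this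
  simp at this

lemma greedyQuery_eq_some {α : Finset (ℕ × Option ℕ)} {a : ℕ} (h : greedyQuery S I α = some a) :
    dPar (I (restrict S α)) ≠ 0 ∧ a ∈ minNodeCover (Splus (I (restrict S α))) := by
  rw [greedyQuery] at h
  split_ifs at h with hd
  exact ⟨hd, mem_toList.1 (List.mem_of_head? h)⟩

variable (hI : AdmissibleReduction I)
include hI

lemma isQueryStrategy_greedyQuery : IsQueryStrategy S (greedyQuery S I) := by
  intro α a h
  have ha := attrs_mono (hI.subset _)
    (attrs_mono (filter_subset _ _) ((minNodeCover_spec _).1.1 (greedyQuery_eq_some h).2))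
  exact ⟨attrs_restrict_subset S α ha, notMem_of_mem_attrs_restrict ha⟩

lemma greedyPotential_lt {α : Finset (ℕ × Option ℕ)} {a : ℕ} {l : Option ℕ}
    (hES : insert (a, l) α ∈ ESys S true) (ha : greedyQuery S I α = some a) :
    greedyPotential S I (insert (a, l) α) < greedyPotential S I α := by
  obtain ⟨hd, haB⟩ := greedyQuery_eq_some ha
  obtain ⟨hB, hcard⟩ := minNodeCover_spec (Splus (I (restrict S α)))
  have hd' := hI.dPar_restrict_anti (S := S) (subset_insert (a, l) α) hES.1
  have hβ' := hI.betaPlus_le_betaIplus hES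
  have hβ := one_le_betaPlus (Nat.pos_of_ne_zero hd)
  unfold greedyPotential
  rw [if_neg hd]
  rcases hd'.eq_or_lt with heq | hlt
  · have hlt : betaPlus (I (restrict S (insert (a, l) α))) < betaPlus (I (restrict S α)) :=
      calc _ ≤ _ := beta_le_card (hI.isNodeCover_erase hES.1 hB heq)
        _ ≤ ((minNodeCover _).erase a).card := card_le_card inter_subset_left
        _ < betaPlus (I (restrict S α)) := by
          rw [card_erase_of_mem haB, hcard]
          exact Nat.sub_lt hβ Nat.one_pos
    rw [if_neg (heq ▸ hd), heq]
    omega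
  · split_ifs with hd0
    · omega
    have : (dPar (I (restrict S (insert (a, l) α))) - 1) * betaIplus S I + betaIplus S I ≤
        (dPar (I (restrict S α)) - 1) * betaIplus S I := by
      rw [← Nat.succ_mul]
      exact Nat.mul_le_mul_right _ (by omega)
    omega

lemma greedyPotential_empty_le (hwf : ∀ r ∈ S, r.WF) :
    greedyPotential S I ∅ ≤ dPar (I S) * betaIplus S I := by
  have hβ : betaPlus (I S) ≤ betaIplus S I := by
    simpa [restrict_empty hwf] using
      hI.betaPlus_le_betaIplus (S := S) (α := ∅) ⟨by simp [ConsistentE], by simp⟩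
  rw [greedyPotential, restrict_empty hwf]
  split_ifs with hd
  · exact Nat.zero_le _
  calc _ ≤ (dPar (I S) - 1) * betaIplus S I + betaIplus S I := by omega
    _ = dPar (I S) * betaIplus S I := by rw [← Nat.succ_mul]; congr 1; omega

lemma depth_strategyTree_greedyQuery_le (hwf : ∀ r ∈ S, r.WF) :
    (strategyTree S (greedyQuery S I)).depth ≤ dPar (I S) * betaIplus S I := by
  have hσ := isQueryStrategy_greedyQuery (S := S) hI
  refine (strategyTree.depth_le hσ _ fun E a l hrun ha => ?_).trans
    (greedyPotential_empty_le hI hwf)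
  have hES := hrun.mem_ESys hσ
  rw [List.toFinset_cons] at hES
  exact greedyPotential_lt hI hES ha

end Greedy

lemma mem_realizedRules_of_len_restrict_eq_zero {S : Finset Rule} {α : Finset (ℕ × Option ℕ)}
    {r' : Rule} (hr' : r' ∈ restrict S α) (h : r'.len = 0) :
    ∃ r ∈ realizedRules S α, r.restrict α = r' := by
  obtain ⟨r, hr, -, rfl⟩ := mem_restrict.1 hr'
  exact ⟨r, mem_realizedRules.2 ⟨hr, Rule.len_restrict_eq_zero_iff.1 h⟩, rfl⟩

/-- When `d(I_AD(S_α)) = 0`, a rule `r` consistent with `α` and not realized by `α` is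
dropped by `I_AD`, so its decision is that of a length-0 rule of `S_α`, i.e. of a rule
realized by `α`. -/
lemma not_consistentE_of_dPar_I_AD_eq_zero {S : Finset Rule} {α : Finset (ℕ × Option ℕ)}
    (hd : dPar (I_AD (restrict S α)) = 0) {r : Rule} (hr : r ∈ S)
    (hrα : r ∉ realizedRules S α) (hrhs : r.rhs ∉ (realizedRules S α).image Rule.rhs) :
    ¬ ConsistentE (liftK r.K ∪ α) := by
  intro hc
  have hmem : r.restrict α ∈ restrict S α := mem_restrict.2 ⟨r, hr, hc, rfl⟩
  have hlen : (r.restrict α).len ≠ 0 := fun h0 =>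
    hrα (mem_realizedRules.2 ⟨hr, Rule.len_restrict_eq_zero_iff.1 h0⟩)
  have hD0 : r.rhs ∈ D0 (restrict S α) := by
    by_contra hD0
    have hmemI : r.restrict α ∈ I_AD (restrict S α) := mem_filter.2 ⟨hmem, Or.inr hD0⟩
    exact hlen (Nat.le_zero.1 ((le_sup (f := Rule.len) hmemI).trans_eq hd))
  obtain ⟨r0', hr0', hrhs0⟩ := mem_image.1 hD0
  obtain ⟨r0, hr0, rfl⟩ :=
    mem_realizedRules_of_len_restrict_eq_zero (mem_filter.1 hr0').1 (mem_filter.1 hr0').2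
  exact hrhs (mem_image.2 ⟨r0, hr0, hrhs0⟩)

lemma not_consistentE_of_dPar_I_SR_eq_zero {S : Finset Rule} {α : Finset (ℕ × Option ℕ)}
    (hd : dPar (I_SR (restrict S α)) = 0) (hα : realizedRules S α = ∅) {r : Rule} (hr : r ∈ S) :
    ¬ ConsistentE (liftK r.K ∪ α) := by
  intro hc
  have hmem : r.restrict α ∈ restrict S α := mem_restrict.2 ⟨r, hr, hc, rfl⟩
  have hno0 : ¬ ∃ r0 ∈ restrict S α, r0.len = 0 := by
    rintro ⟨r0', hr0', h0⟩
    obtain ⟨r0, hr0, -⟩ := mem_realizedRules_of_len_restrict_eq_zero hr0' h0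
    simp [hα] at hr0
  have hmemI : r.restrict α ∈ I_SR (restrict S α) := by rwa [I_SR, if_neg hno0]
  exact hno0 ⟨_, hmem, Nat.le_zero.1 ((le_sup (f := Rule.len) hmemI).trans_eq hd)⟩

lemma h_EAD_le_depth {S : Finset Rule} {G : DGraph} (h : TreeSolvesEAD S G) :
    h_EAD S ≤ G.depth :=
  Nat.sInf_le ⟨G, h, rfl⟩

lemma h_ESR_le_depth {S : Finset Rule} {G : DGraph} (h : TreeSolvesESR S G) :
    h_ESR S ≤ G.depth :=
  Nat.sInf_le ⟨G, h, rfl⟩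

theorem statement_14_general (S : Finset Rule) (hwf : ∀ r ∈ S, r.WF) :
    h_EAD S ≤ dPar (I_AD S) * beta_EADplus S ∧
    h_ESR S ≤ dPar (I_SR S) * beta_ESRplus S := by
  have hAD := isQueryStrategy_greedyQuery (S := S) admissibleReduction_I_AD
  have hSR := isQueryStrategy_greedyQuery (S := S) admissibleReduction_I_SR
  have hsolvesAD : TreeSolvesEAD S (strategyTree S (greedyQuery S I_AD)) :=
    ⟨strategyTree.isDG hAD, strategyTree.isTree hAD, strategyTree.solvesAD hAD fun _ h _ =>
      not_consistentE_of_dPar_I_AD_eq_zero (greedyQuery_eq_none h)⟩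
  have hsolvesSR : TreeSolvesESR S (strategyTree S (greedyQuery S I_SR)) :=
    ⟨strategyTree.isDG hSR, strategyTree.isTree hSR, strategyTree.solvesSR hSR fun _ h hα _ =>
      not_consistentE_of_dPar_I_SR_eq_zero (greedyQuery_eq_none h) hα⟩
  exact ⟨(h_EAD_le_depth hsolvesAD).trans
      (depth_strategyTree_greedyQuery_le admissibleReduction_I_AD hwf),
    (h_ESR_le_depth hsolvesSR).trans
      (depth_strategyTree_greedyQuery_le admissibleReduction_I_SR hwf)⟩

/-- Lemma 16: for C ∈ {EAD, ESR}, h_C(S) ≤ d(I_C(S))·β_C⁺(S). -/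
theorem statement_14 (S : Finset Rule) (hS : S.Nonempty) (hwf : ∀ r ∈ S, r.WF)
    (hn : 0 < nPar S) :
    h_EAD S ≤ dPar (I_AD S) * beta_EADplus S ∧
    h_ESR S ≤ dPar (I_SR S) * beta_ESRplus S :=
  statement_14_general S hwf

end DRS

end
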